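/- Let ρ be a Borel probability measure on ℝ with finite second moment and let N ≥ 1. Then there exists a unique family of Borel probability measures ρ₁,…,ρ_N on ℝ, each with finite second moment, such that: (i) ρ = (1/N)∑_{i=1}^N ρ_i; (ii) for all i < j, every point of the support of ρ_i is ≤ every point of the support of ρ_j; and (iii) for every X = (x₁,…,x_N) ∈ ℝ^N with x₁ < … < x_N, the monotone transport plan between μ_X := (1/N)∑_{i=1}^N δ_{x_i} and ρ, namely γ := (F_{μ_X}^{-1}, F_ρ^{-1})_# Leb_{[0,1]}, equals (1/N)∑_{i=1}^N δ_{x_i} ⊗ ρ_i. -/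

import Mathlib

open MeasureTheory Set
open scoped ENNReal

noncomputable section

/-- Quantile function `F_ν⁻¹(t) = inf {s | F_ν(s) ≥ t}` of a measure on `ℝ`. -/
def quantile (ν : Measure ℝ) (t : ℝ) : ℝ :=
  sInf {s : ℝ | t ≤ (ν (Iic s)).toReal}

/-- Monotone (quadratically optimal) transport plan
`γ = (F_{ν₁}⁻¹, F_{ν₂}⁻¹)_# Leb_{[0,1]}` between two measures on `ℝ`. -/
def monoPlan (ν₁ ν₂ : Measure ℝ) : Measure (ℝ × ℝ) :=
  Measure.map (fun t => (quantile ν₁ t, quantile ν₂ t)) (volume.restrict (Icc (0:ℝ) 1))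

/-- Uniform empirical measure of a point cloud in `ℝ`. -/
def empMeasure1 {N : ℕ} (X : Fin N → ℝ) : Measure ℝ :=
  (N : ℝ≥0∞)⁻¹ • ∑ i : Fin N, Measure.dirac (X i)

/-- Support of a measure on `ℝ`. -/
def msupport (μ : Measure ℝ) : Set ℝ := {x | ∀ ε > 0, 0 < μ (Metric.ball x ε)}

/-!
The pieces are `ρᵢ = N • (F_ρ⁻¹)_# Leb` on the grid interval `(i/N, (i+1)/N]`. Since `F_ρ⁻¹` is
nondecreasing on `(0, 1)` and pushes `Leb_(0,1]` forward to `ρ`, these pieces average to `ρ` and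
have ordered supports. For an increasing cloud `X`, the quantile function of `μ_X` is constantly
`xᵢ` on the `i`-th grid interval, so the monotone plan splits as `(1/N) ∑ δ_{xᵢ} ⊗ ρᵢ`.
Conversely such a splitting determines each `ρᵢ(A)` as `N` times the mass of `{xᵢ} × A`.
-/

open ProbabilityTheory

section Quantile

variable (ρ : Measure ℝ) [IsProbabilityMeasure ρ]

lemma quantile_eq_sInf_cdf (t : ℝ) : quantile ρ t = sInf {s | t ≤ cdf ρ s} := by
  simp only [quantile, cdf_eq_real, measureReal_def]

lemma quantile_le_iff {t : ℝ} (ht0 : 0 < t) (ht1 : t < 1) (s : ℝ) :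
    quantile ρ t ≤ s ↔ t ≤ cdf ρ s := by
  have hne : {s | t ≤ cdf ρ s}.Nonempty :=
    ((tendsto_cdf_atTop ρ).eventually (eventually_ge_nhds ht1)).exists
  have hbdd : BddBelow {s | t ≤ cdf ρ s} := by
    obtain ⟨s₀, hs₀⟩ := ((tendsto_cdf_atBot ρ).eventually (eventually_lt_nhds ht0)).exists
    exact ⟨s₀, fun s hs => le_of_not_gt fun h => (hs.trans ((cdf ρ).mono h.le)).not_gt hs₀⟩
  rw [quantile_eq_sInf_cdf]
  refine ⟨fun h => ?_, fun h => csInf_le hbdd h⟩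
  refine ge_of_tendsto (((cdf ρ).right_continuous s).mono Ioi_subset_Ici_self).tendsto
    (eventually_nhdsWithin_of_forall fun x (hx : s < x) => ?_)
  obtain ⟨a, ha, hax⟩ := exists_lt_of_csInf_lt hne (h.trans_lt hx)
  exact ha.trans ((cdf ρ).mono hax.le)

lemma monotoneOn_quantile : MonotoneOn (quantile ρ) (Ioo 0 1) := fun _ ht _ ht' htt' =>
  (quantile_le_iff ρ ht.1 ht.2 _).2 (htt'.trans ((quantile_le_iff ρ ht'.1 ht'.2 _).1 le_rfl))

variable {a b : ℝ}

lemma aemeasurable_quantile (ha : 0 ≤ a) (hb : b ≤ 1) :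
    AEMeasurable (quantile ρ) (volume.restrict (Ioc a b)) := by
  rw [← Measure.restrict_congr_set Ioo_ae_eq_Ioc]
  exact aemeasurable_restrict_of_monotoneOn measurableSet_Ioo
    ((monotoneOn_quantile ρ).mono (Ioo_subset_Ioo ha hb))

lemma map_quantile_restrict_Ioc_apply_Iic (ha : 0 ≤ a) (hb : b ≤ 1) (s : ℝ) :
    (volume.restrict (Ioc a b)).map (quantile ρ) (Iic s) =
      ENNReal.ofReal (min b (cdf ρ s) - a) := by
  have hpre : quantile ρ ⁻¹' Iic s ∩ Ioo a b = Iic (cdf ρ s) ∩ Ioo a b := by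
    ext t
    simp only [mem_inter_iff, mem_preimage, mem_Iic, and_congr_left_iff]
    exact fun ht => quantile_le_iff ρ (ha.trans_lt ht.1) (ht.2.trans_le hb) s
  rw [Measure.map_apply_of_aemeasurable (aemeasurable_quantile ρ ha hb) measurableSet_Iic,
    ← Measure.restrict_congr_set Ioo_ae_eq_Ioc, Measure.restrict_apply' measurableSet_Ioo, hpre,
    ← Measure.restrict_apply' measurableSet_Ioo, Measure.restrict_congr_set Ioo_ae_eq_Ioc,
    Measure.restrict_apply measurableSet_Iic, inter_comm, Ioc_inter_Iic, Real.volume_Ioc]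

lemma map_quantile_restrict_Ioc_zero_one :
    (volume.restrict (Ioc 0 1)).map (quantile ρ) = ρ := by
  refine Measure.ext_of_Iic _ _ fun s => ?_
  rw [map_quantile_restrict_Ioc_apply_Iic ρ le_rfl le_rfl, min_eq_right (cdf_le_one ρ s),
    sub_zero, ofReal_cdf]

end Quantile

def gridInterval (N i : ℕ) : Set ℝ := Ioc (i / N) ((i + 1) / N)

section Grid

variable {N : ℕ}

lemma monotone_div_natCast : Monotone fun i : ℕ => (i : ℝ) / N :=
  fun _ _ h => div_le_div_of_nonneg_right (Nat.cast_le.2 h) (Nat.cast_nonneg _)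

lemma gridInterval_eq_Ioc_succ (i : ℕ) :
    gridInterval N i = Ioc ((i : ℝ) / N) (((Order.succ i : ℕ) : ℝ) / N) := by
  simp [gridInterval]

lemma volume_gridInterval (hN : 0 < N) (i : ℕ) : volume (gridInterval N i) = (N : ℝ≥0∞)⁻¹ := by
  rw [gridInterval, Real.volume_Ioc, ← sub_div, add_sub_cancel_left, one_div,
    ENNReal.ofReal_inv_of_pos (by positivity), ENNReal.ofReal_natCast]

lemma gridInterval_subset_Ioc_zero_one {i : ℕ} (hi : i < N) : gridInterval N i ⊆ Ioc 0 1 := by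
  have hN : (0 : ℝ) < N := Nat.cast_pos.2 ((Nat.zero_le i).trans_lt hi)
  exact Ioc_subset_Ioc (by positivity) ((div_le_one hN).2 (by exact_mod_cast hi))

lemma lt_of_mem_gridInterval {i j : ℕ} (hij : i < j) {t t' : ℝ} (ht : t ∈ gridInterval N i)
    (ht' : t' ∈ gridInterval N j) : t < t' :=
  ht.2.trans_lt (lt_of_le_of_lt (by simpa using monotone_div_natCast (N := N) hij) ht'.1)

lemma pairwise_disjoint_gridInterval : Pairwise (Function.onFun Disjoint (gridInterval N)) := by
  simpa only [← gridInterval_eq_Ioc_succ] using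
    (monotone_div_natCast (N := N)).pairwise_disjoint_on_Ioc_succ

lemma iUnion_gridInterval (hN : 0 < N) : ⋃ i : Fin N, gridInterval N i = Ioc 0 1 := by
  have h := monotone_div_natCast (N := N) |>.biUnion_Ico_Ioc_map_succ 0 N
  simp only [← gridInterval_eq_Ioc_succ, Nat.cast_zero, zero_div,
    div_self (Nat.cast_ne_zero.2 hN.ne' : (N : ℝ) ≠ 0)] at h
  rw [← h]
  ext t
  simp [Fin.exists_iff]

lemma volume_restrict_Ioc_zero_one_eq_sum (hN : 0 < N) :
    volume.restrict (Ioc 0 1) =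
      Measure.sum fun i : Fin N => volume.restrict (gridInterval N i) := by
  rw [← iUnion_gridInterval hN, Measure.restrict_iUnion
    (pairwise_disjoint_gridInterval.comp_of_injective Fin.val_injective) fun _ => measurableSet_Ioc]

lemma map_restrict_Ioc_zero_one_eq_sum {α : Type*} [MeasurableSpace α] (hN : 0 < N) {f : ℝ → α}
    (hf : AEMeasurable f (volume.restrict (Ioc 0 1))) :
    (volume.restrict (Ioc 0 1)).map f =
      ∑ i : Fin N, (volume.restrict (gridInterval N i)).map f := by
  rw [volume_restrict_Ioc_zero_one_eq_sum hN] at hf ⊢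
  rw [Measure.map_sum hf, Measure.sum_fintype]

end Grid

section Empirical

open scoped Finset

variable {N : ℕ} (X : Fin N → ℝ)

lemma empMeasure1_apply_Iic (s : ℝ) :
    empMeasure1 X (Iic s) = (N : ℝ≥0∞)⁻¹ * #{j | X j ≤ s} := by
  simp only [empMeasure1, Measure.smul_apply, Measure.finsetSum_apply, smul_eq_mul,
    Measure.dirac_apply' _ measurableSet_Iic, indicator_apply, mem_Iic, Pi.one_apply,
    Finset.natCast_card_filter]

lemma isProbabilityMeasure_empMeasure1 (hN : 0 < N) : IsProbabilityMeasure (empMeasure1 X) :=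
  ⟨by simp [empMeasure1, ENNReal.inv_mul_cancel (Nat.cast_ne_zero.2 hN.ne')]⟩

lemma StrictMono.lt_card_filter_le_iff {X : Fin N → ℝ} (hX : StrictMono X) (i : Fin N) (s : ℝ) :
    (i : ℕ) < #{j | X j ≤ s} ↔ X i ≤ s := by
  constructor
  · contrapose!
    intro h
    calc #{j | X j ≤ s} ≤ #(Finset.Iio i) := Finset.card_le_card fun j hj =>
          Finset.mem_Iio.2 (hX.lt_iff_lt.1 ((Finset.mem_filter.1 hj).2.trans_lt h))
      _ = i := Fin.card_Iio i
  · intro h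
    calc (i : ℕ) < #(Finset.Iic i) := by simp [Fin.card_Iic]
      _ ≤ #{j | X j ≤ s} := Finset.card_le_card fun j hj =>
          Finset.mem_filter.2 ⟨Finset.mem_univ _, (hX.monotone (Finset.mem_Iic.1 hj)).trans h⟩

lemma le_div_iff_lt_of_mem_gridInterval (hN : 0 < N) {i : ℕ} {t : ℝ}
    (ht : t ∈ gridInterval N i) (k : ℕ) : t ≤ k / N ↔ i < k := by
  have hN' : (0 : ℝ) < N := Nat.cast_pos.2 hN
  constructor
  · intro h
    exact_mod_cast (div_lt_div_iff_of_pos_right hN').1 (ht.1.trans_le h)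
  · intro h
    exact ht.2.trans (div_le_div_of_nonneg_right (by exact_mod_cast h) hN'.le)

lemma quantile_empMeasure1 {X : Fin N → ℝ} (hX : StrictMono X) {i : Fin N} {t : ℝ}
    (ht : t ∈ gridInterval N i) : quantile (empMeasure1 X) t = X i := by
  have hset : {s | t ≤ (empMeasure1 X (Iic s)).toReal} = Ici (X i) := by
    ext s
    rw [mem_ofPred_eq, empMeasure1_apply_Iic, ENNReal.toReal_mul, ENNReal.toReal_inv,
      ENNReal.toReal_natCast, ENNReal.toReal_natCast, inv_mul_eq_div,
      le_div_iff_lt_of_mem_gridInterval i.pos ht, hX.lt_card_filter_le_iff, mem_Ici]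
  rw [quantile, hset, csInf_Ici]

end Empirical

lemma ENNReal.inv_smul_smul {M : Type*} [AddCommMonoid M] [Module ℝ≥0∞ M] {c : ℝ≥0∞}
    (hc0 : c ≠ 0) (hc : c ≠ ⊤) (x : M) : c⁻¹ • c • x = x := by
  rw [smul_smul, ENNReal.inv_mul_cancel hc0 hc, one_smul]

section Support

lemma msupport_smul {c : ℝ≥0∞} (hc : c ≠ 0) (μ : Measure ℝ) : msupport (c • μ) = msupport μ := by
  ext x
  simp [msupport, pos_iff_ne_zero, hc]

variable {α : Type*} [MeasurableSpace α] {μ : Measure α}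

lemma exists_dist_lt_of_mem_msupport_map_restrict {f : α → ℝ} {s : Set α} (hs : MeasurableSet s)
    {x : ℝ} (hx : x ∈ msupport ((μ.restrict s).map f)) {ε : ℝ} (hε : 0 < ε) :
    ∃ t ∈ s, dist (f t) x < ε := by
  have h := (hx ε hε).ne'
  by_cases hf : AEMeasurable f (μ.restrict s)
  · rw [Measure.map_apply_of_aemeasurable hf measurableSet_ball,
      Measure.restrict_apply' hs] at h
    obtain ⟨t, hft, hts⟩ := nonempty_of_measure_ne_zero h
    exact ⟨t, hts, hft⟩
  · simp [Measure.map_of_not_aemeasurable hf] at h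

lemma le_of_mem_msupport_map_restrict {f g : α → ℝ} {s s' : Set α} (hs : MeasurableSet s)
    (hs' : MeasurableSet s') (hfg : ∀ t ∈ s, ∀ t' ∈ s', f t ≤ g t') {x y : ℝ}
    (hx : x ∈ msupport ((μ.restrict s).map f)) (hy : y ∈ msupport ((μ.restrict s').map g)) :
    x ≤ y := by
  refine le_of_forall_pos_lt_add fun ε hε => ?_
  obtain ⟨t, ht, hxt⟩ := exists_dist_lt_of_mem_msupport_map_restrict hs hx (half_pos hε)
  obtain ⟨t', ht', hyt⟩ := exists_dist_lt_of_mem_msupport_map_restrict hs' hy (half_pos hε)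
  rw [Real.dist_eq, abs_lt] at hxt hyt
  linarith [hfg t ht t' ht']

end Support

section Dirac

variable {ι α β : Type*} [Fintype ι] [MeasurableSpace α] [MeasurableSingletonClass α]
  [MeasurableSpace β] {X : ι → α}

lemma sum_dirac_prod_apply_singleton_prod (hX : Function.Injective X) (τ : ι → Measure β)
    [∀ j, SFinite (τ j)] (i : ι) (A : Set β) :
    (∑ j, (Measure.dirac (X j)).prod (τ j)) ({X i} ×ˢ A) = τ i A := by
  rw [Measure.finsetSum_apply, Fintype.sum_eq_single i fun j hj => ?_]
  · rw [Measure.prod_prod, Measure.dirac_apply_of_mem (mem_singleton _), one_mul]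
  · rw [Measure.prod_prod, Measure.dirac_apply,
      indicator_of_notMem (mem_singleton_iff.not.2 (hX.ne hj)), zero_mul]

lemma eq_of_smul_sum_dirac_prod_eq {c : ℝ≥0∞} (hc0 : c ≠ 0) (hc : c ≠ ⊤)
    (hX : Function.Injective X) {τ τ' : ι → Measure β} [∀ j, SFinite (τ j)] [∀ j, SFinite (τ' j)]
    (h : c • ∑ j, (Measure.dirac (X j)).prod (τ j) = c • ∑ j, (Measure.dirac (X j)).prod (τ' j)) :
    τ = τ' := by
  funext i
  ext A
  have hA := congrArg (fun μ : Measure (α × β) => μ ({X i} ×ˢ A)) h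
  simpa only [Measure.smul_apply, smul_eq_mul, sum_dirac_prod_apply_singleton_prod hX,
    ENNReal.mul_right_inj hc0 hc] using hA

end Dirac

def quantilePiece (ρ : Measure ℝ) (N : ℕ) (i : Fin N) : Measure ℝ :=
  (N : ℝ≥0∞) • (volume.restrict (gridInterval N i)).map (quantile ρ)

section QuantilePiece

variable (ρ : Measure ℝ) [IsProbabilityMeasure ρ] {N : ℕ}

lemma aemeasurable_quantile_restrict_gridInterval (i : Fin N) :
    AEMeasurable (quantile ρ) (volume.restrict (gridInterval N i)) :=
  (aemeasurable_quantile ρ le_rfl le_rfl).mono_measure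
    (Measure.restrict_mono (gridInterval_subset_Ioc_zero_one i.isLt) le_rfl)

instance isProbabilityMeasure_quantilePiece (i : Fin N) :
    IsProbabilityMeasure (quantilePiece ρ N i) :=
  ⟨by rw [quantilePiece, Measure.smul_apply, Measure.map_apply_of_aemeasurable
      (aemeasurable_quantile_restrict_gridInterval ρ i) MeasurableSet.univ, preimage_univ,
      Measure.restrict_apply_univ, volume_gridInterval i.pos, smul_eq_mul,
      ENNReal.mul_inv_cancel (Nat.cast_ne_zero.2 i.pos.ne') (ENNReal.natCast_ne_top N)]⟩

lemma sum_map_quantile_restrict_gridInterval (hN : 0 < N) :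
    ∑ i : Fin N, (volume.restrict (gridInterval N i)).map (quantile ρ) = ρ := by
  rw [← map_restrict_Ioc_zero_one_eq_sum hN (aemeasurable_quantile ρ le_rfl le_rfl),
    map_quantile_restrict_Ioc_zero_one]

lemma inv_smul_sum_quantilePiece (hN : 0 < N) :
    (N : ℝ≥0∞)⁻¹ • ∑ i, quantilePiece ρ N i = ρ := by
  simp only [quantilePiece, ← Finset.smul_sum, ENNReal.inv_smul_smul (Nat.cast_ne_zero.2 hN.ne')
    (ENNReal.natCast_ne_top N), sum_map_quantile_restrict_gridInterval ρ hN]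

lemma integrable_quantilePiece {E : Type*} [NormedAddCommGroup E] {g : ℝ → E}
    (hg : Integrable g ρ) (i : Fin N) : Integrable g (quantilePiece ρ N i) := by
  have hle : (volume.restrict (gridInterval N i)).map (quantile ρ) ≤ ρ :=
    (Finset.single_le_sum (fun _ _ => Measure.zero_le _) (Finset.mem_univ i)).trans_eq
      (sum_map_quantile_restrict_gridInterval ρ i.pos)
  exact (hg.mono_measure hle).smul_measure (ENNReal.natCast_ne_top N)

lemma le_of_mem_msupport_quantilePiece {i j : Fin N} (hij : i < j) {x y : ℝ}
    (hx : x ∈ msupport (quantilePiece ρ N i)) (hy : y ∈ msupport (quantilePiece ρ N j)) :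
    x ≤ y := by
  have hN : (0 : ℝ) < N := Nat.cast_pos.2 i.pos
  rw [quantilePiece, msupport_smul (by simpa using i.pos.ne')] at hx hy
  rw [gridInterval, ← Measure.restrict_congr_set Ioo_ae_eq_Ioc] at hy
  refine le_of_mem_msupport_map_restrict measurableSet_Ioc measurableSet_Ioo
    (fun t ht t' ht' => ?_) hx hy
  have htt' : t < t' := lt_of_mem_gridInterval hij ht (Ioo_subset_Ioc_self ht')
  have ht'1 : t' < 1 := ht'.2.trans_le ((div_le_one hN).2 (by exact_mod_cast j.isLt))
  exact monotoneOn_quantile ρ ⟨(gridInterval_subset_Ioc_zero_one i.isLt ht).1, htt'.trans ht'1⟩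
    ⟨(gridInterval_subset_Ioc_zero_one j.isLt (Ioo_subset_Ioc_self ht')).1, ht'1⟩ htt'.le

lemma monoPlan_empMeasure1 (hN : 0 < N) {X : Fin N → ℝ} (hX : StrictMono X) :
    monoPlan (empMeasure1 X) ρ =
      (N : ℝ≥0∞)⁻¹ • ∑ i, (Measure.dirac (X i)).prod (quantilePiece ρ N i) := by
  have := isProbabilityMeasure_empMeasure1 X hN
  simp only [quantilePiece, Measure.prod_smul_right, ← Finset.smul_sum,
    ENNReal.inv_smul_smul (Nat.cast_ne_zero.2 hN.ne') (ENNReal.natCast_ne_top N)]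
  rw [monoPlan, ← Measure.restrict_congr_set Ioc_ae_eq_Icc, map_restrict_Ioc_zero_one_eq_sum hN
    ((aemeasurable_quantile _ le_rfl le_rfl).prodMk (aemeasurable_quantile ρ le_rfl le_rfl))]
  refine Finset.sum_congr rfl fun i _ => ?_
  rw [Measure.dirac_prod, AEMeasurable.map_map_of_aemeasurable
    measurable_prodMk_left.aemeasurable (aemeasurable_quantile_restrict_gridInterval ρ i)]
  refine Measure.map_congr (ae_restrict_of_forall_mem measurableSet_Ioc fun t ht => ?_)
  simp only [Function.comp_apply, quantile_empMeasure1 hX ht]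

end QuantilePiece

/-- Decomposition of a measure on `ℝ` into `N` ordered pieces realizing all the monotone
transport plans from `N`-point clouds. -/
theorem statement10 (N : ℕ) (hN : 1 ≤ N) (ρ : Measure ℝ) [IsProbabilityMeasure ρ]
    (hmom : Integrable (fun x => x ^ 2) ρ) :
    ∃! ρs : Fin N → Measure ℝ,
      (∀ i, IsProbabilityMeasure (ρs i)) ∧
      (∀ i, Integrable (fun x => x ^ 2) (ρs i)) ∧
      ρ = (N : ℝ≥0∞)⁻¹ • ∑ i : Fin N, ρs i ∧
      (∀ i j : Fin N, i < j →
        ∀ x ∈ msupport (ρs i), ∀ y ∈ msupport (ρs j), x ≤ y) ∧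
      (∀ X : Fin N → ℝ, StrictMono X →
        monoPlan (empMeasure1 X) ρ =
          (N : ℝ≥0∞)⁻¹ • ∑ i : Fin N, (Measure.dirac (X i)).prod (ρs i)) := by
  refine ⟨quantilePiece ρ N, ⟨isProbabilityMeasure_quantilePiece ρ,
    integrable_quantilePiece ρ hmom, (inv_smul_sum_quantilePiece ρ hN).symm,
    fun i j hij x hx y hy => le_of_mem_msupport_quantilePiece ρ hij hx hy,
    fun X hX => monoPlan_empMeasure1 ρ hN hX⟩, ?_⟩
  rintro ρs ⟨hprob, -, -, -, hplan⟩
  have hX : StrictMono fun i : Fin N => ((i : ℕ) : ℝ) :=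
    Nat.strictMono_cast.comp Fin.val_strictMono
  exact eq_of_smul_sum_dirac_prod_eq (ENNReal.inv_ne_zero.2 (ENNReal.natCast_ne_top N))
    (ENNReal.inv_ne_top.2 (Nat.cast_ne_zero.2 (by omega))) hX.injective
    ((hplan _ hX).symm.trans (monoPlan_empMeasure1 ρ hN hX))
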